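/- Let (Y,d) be a compact metric space and g : Y → Y a continuous surjection satisfying Axioms 1 and 2 with constants β > 0, integer K ≥ 1 and 0 < γ < 1, and fix ε' with 0 < ε' ≤ β/2 such that d̂(x,y) ≤ ε' implies d̂(ĝ^{−n}(x), ĝ^{−n}(y)) ≤ β for n = 0, 1, …, 2K−1. Then for any 0 < ε ≤ ε' and y, z ∈ Ŷ: y ∈ Ŷ^u(z, ε) if and only if d(y_n, z_n) ≤ ε for every n ≥ 0 and d̂(y, z) ≤ ε. -/
import Mathlib

set_option maxHeartbeats 1000000


open Metric Function Topology

variable {Y : Type*} [MetricSpace Y] [CompactSpace Y]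

/-- The stationary inverse limit of `g : Y → Y`. -/
abbrev InvLim (g : Y → Y) : Type _ :=
  {y : ℕ → Y // ∀ n : ℕ, y n = g (y (n + 1))}

/-- The induced map `ĝ` on the inverse limit. -/
def ghat (g : Y → Y) (y : InvLim g) : InvLim g :=
  ⟨fun n => g (y.1 n), fun n => congrArg g (y.2 n)⟩

/-- The inverse `ĝ⁻¹` of the induced map on the inverse limit. -/
def ghatInv (g : Y → Y) (y : InvLim g) : InvLim g :=
  ⟨fun n => y.1 (n + 1), fun n => y.2 (n + 1)⟩

/-- `d'(x,y) = sup_n γ^n d(x_n, y_n)`. -/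
noncomputable def dp (g : Y → Y) (γ : ℝ) (x y : InvLim g) : ℝ :=
  ⨆ n : ℕ, γ ^ n * dist (x.1 n) (y.1 n)

/-- `d̂(x,y) = ∑_{k=0}^{K-1} γ^{-k} d'(ĝ^{-k} x, ĝ^{-k} y)`. -/
noncomputable def dhat (g : Y → Y) (γ : ℝ) (K : ℕ) (x y : InvLim g) : ℝ :=
  ∑ k ∈ Finset.range K, (γ ^ k)⁻¹ * dp g γ ((ghatInv g)^[k] x) ((ghatInv g)^[k] y)

/-- Axiom 1: `d(x,y) ≤ β` implies `d(g^K x, g^K y) ≤ γ^K d(g^{2K} x, g^{2K} y)`. -/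
def axiom1 (g : Y → Y) (β : ℝ) (K : ℕ) (γ : ℝ) : Prop :=
  ∀ x y : Y, dist x y ≤ β →
    dist (g^[K] x) (g^[K] y) ≤ γ ^ K * dist (g^[2 * K] x) (g^[2 * K] y)

/-- Axiom 2: `g^K(B(g^K x, ε)) ⊆ g^{2K}(B(x, γ ε))` for `0 < ε ≤ β`. -/
def axiom2 (g : Y → Y) (β : ℝ) (K : ℕ) (γ : ℝ) : Prop :=
  ∀ x : Y, ∀ ε : ℝ, 0 < ε → ε ≤ β →
    g^[K] '' Metric.closedBall (g^[K] x) ε ⊆ g^[2 * K] '' Metric.closedBall x (γ * ε)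

/-- The local stable set `Ŷ^s(x, ε)` in the inverse limit. -/
def Shat (g : Y → Y) (γ : ℝ) (K : ℕ) (x : InvLim g) (ε : ℝ) : Set (InvLim g) :=
  {y | ∀ n : ℕ, dhat g γ K ((ghat g)^[n] x) ((ghat g)^[n] y) ≤ ε}

/-- The local unstable set `Ŷ^u(x, ε)` in the inverse limit. -/
def Uhat (g : Y → Y) (γ : ℝ) (K : ℕ) (x : InvLim g) (ε : ℝ) : Set (InvLim g) :=
  {y | ∀ n : ℕ, dhat g γ K ((ghatInv g)^[n] x) ((ghatInv g)^[n] y) ≤ ε}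

set_option linter.unusedSectionVars false in
lemma invlim_shift (g : Y → Y) (x : InvLim g) (k : ℕ) : ∀ (n : ℕ),
    ((ghatInv g)^[k] x).1 n = x.1 (n + k) := by
  induction k generalizing x with
  | zero => intro n; rfl
  | succ k ih =>
      intro n
      rw [Function.iterate_succ_apply, ih]
      rfl

set_option linter.unusedSectionVars false in
lemma invlim_iter (g : Y → Y) (x : InvLim g) : ∀ (j n : ℕ),
    g^[j] (x.1 (n + j)) = x.1 n := by
  intro j
  induction j with
  | zero => intro n; rfl
  | succ j ih =>
      intro n
      show g^[j+1] (x.1 (n + j + 1)) = x.1 n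
      rw [Function.iterate_succ_apply, ← x.2 (n + j)]
      exact ih n

lemma exists_dist_bound : ∃ C : ℝ, 0 ≤ C ∧ ∀ a b : Y, dist a b ≤ C := by
  have hb := (isCompact_univ (X := Y)).isBounded
  rw [Metric.isBounded_iff] at hb
  obtain ⟨C, hC⟩ := hb
  exact ⟨max C 0, le_max_right _ _,
    fun a b => le_trans (hC (Set.mem_univ a) (Set.mem_univ b)) (le_max_left _ _)⟩

lemma dp_bdd (g : Y → Y) {γ : ℝ} (hγ0 : 0 < γ) (hγ1 : γ < 1) (x y : InvLim g) :
    BddAbove (Set.range fun n : ℕ => γ ^ n * dist (x.1 n) (y.1 n)) := by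
  obtain ⟨C, hC0, hC⟩ := exists_dist_bound (Y := Y)
  refine ⟨C, ?_⟩
  rintro _ ⟨n, rfl⟩
  calc γ ^ n * dist (x.1 n) (y.1 n) ≤ 1 * C :=
        mul_le_mul (pow_le_one₀ hγ0.le hγ1.le) (hC _ _) dist_nonneg zero_le_one
  _ = C := one_mul C

lemma le_dp (g : Y → Y) {γ : ℝ} (hγ0 : 0 < γ) (hγ1 : γ < 1) (x y : InvLim g) (n : ℕ) :
    γ ^ n * dist (x.1 n) (y.1 n) ≤ dp g γ x y :=
  le_ciSup (dp_bdd g hγ0 hγ1 x y) n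

lemma dp_nonneg (g : Y → Y) {γ : ℝ} (hγ0 : 0 < γ) (hγ1 : γ < 1) (x y : InvLim g) :
    0 ≤ dp g γ x y :=
  le_trans (by positivity) (le_dp g hγ0 hγ1 x y 0)

set_option linter.unusedSectionVars false in
lemma dp_symm (g : Y → Y) (γ : ℝ) (x y : InvLim g) : dp g γ x y = dp g γ y x := by
  unfold dp; simp_rw [dist_comm]

set_option linter.unusedSectionVars false in
lemma dhat_symm (g : Y → Y) (γ : ℝ) (K : ℕ) (x y : InvLim g) :
    dhat g γ K x y = dhat g γ K y x := by
  unfold dhat; simp_rw [dp_symm]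

/-- Lemma 3.4: description of the local unstable sets in the inverse limit. -/
theorem stmt7 (g : Y → Y) (hgc : Continuous g) (hgs : Function.Surjective g)
    (β γ : ℝ) (K : ℕ) (hβ : 0 < β) (hK : 1 ≤ K) (hγ0 : 0 < γ) (hγ1 : γ < 1)
    (h1 : axiom1 g β K γ) (h2 : axiom2 g β K γ)
    (ε' : ℝ) (hε'0 : 0 < ε') (hε'β : ε' ≤ β / 2)
    (hε' : ∀ x y : InvLim g, dhat g γ K x y ≤ ε' → ∀ n : ℕ, n < 2 * K →
      dhat g γ K ((ghatInv g)^[n] x) ((ghatInv g)^[n] y) ≤ β) :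
    ∀ ε : ℝ, 0 < ε → ε ≤ ε' → ∀ y z : InvLim g,
      y ∈ Uhat g γ K z ε ↔ ((∀ n : ℕ, dist (y.1 n) (z.1 n) ≤ ε) ∧ dhat g γ K y z ≤ ε) := by
  intro ε hε0 hεε' y z
  constructor
  · intro hy
    constructor
    · intro n
      have hn := hy n
      have h0K : 0 ∈ Finset.range K := Finset.mem_range.mpr (by omega)
      have hsingle : (γ ^ 0)⁻¹ * dp g γ ((ghatInv g)^[0] ((ghatInv g)^[n] z))
            ((ghatInv g)^[0] ((ghatInv g)^[n] y))
          ≤ dhat g γ K ((ghatInv g)^[n] z) ((ghatInv g)^[n] y) := by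
        refine Finset.single_le_sum (f := fun k => (γ ^ k)⁻¹ *
          dp g γ ((ghatInv g)^[k] ((ghatInv g)^[n] z)) ((ghatInv g)^[k] ((ghatInv g)^[n] y)))
          (fun i _ => ?_) h0K
        have := dp_nonneg g hγ0 hγ1 ((ghatInv g)^[i] ((ghatInv g)^[n] z))
          ((ghatInv g)^[i] ((ghatInv g)^[n] y))
        positivity
      simp only [Function.iterate_zero, id_eq, pow_zero, inv_one, one_mul] at hsingle
      have hd0 : γ ^ 0 * dist (((ghatInv g)^[n] z).1 0) (((ghatInv g)^[n] y).1 0)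
          ≤ dp g γ ((ghatInv g)^[n] z) ((ghatInv g)^[n] y) := le_dp g hγ0 hγ1 _ _ 0
      rw [invlim_shift, invlim_shift] at hd0
      simp only [pow_zero, one_mul, Nat.zero_add] at hd0
      rw [dist_comm]
      exact hd0.trans (hsingle.trans hn)
    · have h0 := hy 0
      simp only [Function.iterate_zero, id_eq] at h0
      rw [dhat_symm]
      exact h0
  · rintro ⟨hd, hdh⟩ n
    set s : ℕ → ℝ := fun k => dp g γ ((ghatInv g)^[k] z) ((ghatInv g)^[k] y) with hs_def
    have hβa : ∀ m, dist (y.1 m) (z.1 m) ≤ β :=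
      fun m => (hd m).trans (hεε'.trans (hε'β.trans (by linarith)))
    -- key contraction on coordinates
    have key : ∀ m, dist (y.1 (m + K)) (z.1 (m + K)) ≤ γ ^ K * dist (y.1 m) (z.1 m) := by
      intro m
      have h := h1 (y.1 (m + 2 * K)) (z.1 (m + 2 * K)) (hβa _)
      have e1 : m + 2 * K = (m + K) + K := by omega
      rw [e1] at h
      rw [invlim_iter g y K (m + K), invlim_iter g z K (m + K)] at h
      have e2 : (m + K) + K = m + 2 * K := by omega
      rw [e2, invlim_iter g y (2 * K) m, invlim_iter g z (2 * K) m] at h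
      exact h
    have hs0 : ∀ k, 0 ≤ s k := fun k => dp_nonneg g hγ0 hγ1 _ _
    -- contraction on the sups
    have hsK : ∀ k, s (k + K) ≤ γ ^ K * s k := by
      intro k
      refine ciSup_le fun m => ?_
      rw [invlim_shift, invlim_shift]
      have hle : γ ^ m * dist (z.1 (m + k)) (y.1 (m + k)) ≤ s k := by
        have := le_dp g hγ0 hγ1 ((ghatInv g)^[k] z) ((ghatInv g)^[k] y) m
        rwa [invlim_shift, invlim_shift] at this
      have hkey : dist (z.1 (m + (k + K))) (y.1 (m + (k + K)))
          ≤ γ ^ K * dist (z.1 (m + k)) (y.1 (m + k)) := by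
        have := key (m + k)
        have e : m + k + K = m + (k + K) := by omega
        rw [e] at this
        rw [dist_comm, dist_comm (z.1 (m + k))]
        exact this
      have hγm : (0:ℝ) ≤ γ ^ m := by positivity
      calc γ ^ m * dist (z.1 (m + (k + K))) (y.1 (m + (k + K)))
          ≤ γ ^ m * (γ ^ K * dist (z.1 (m + k)) (y.1 (m + k))) :=
            mul_le_mul_of_nonneg_left hkey hγm
        _ = γ ^ K * (γ ^ m * dist (z.1 (m + k)) (y.1 (m + k))) := by ring
        _ ≤ γ ^ K * s k := mul_le_mul_of_nonneg_left hle (by positivity)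
    -- dhat of shifts in terms of s
    have hD : ∀ n, dhat g γ K ((ghatInv g)^[n] z) ((ghatInv g)^[n] y)
        = ∑ k ∈ Finset.range K, (γ ^ k)⁻¹ * s (k + n) := by
      intro n
      unfold dhat
      refine Finset.sum_congr rfl fun k _ => ?_
      rw [hs_def]
      rw [← Function.iterate_add_apply, ← Function.iterate_add_apply]
    -- monotone step
    have hstep : ∀ n, (∑ k ∈ Finset.range K, (γ ^ k)⁻¹ * s (k + (n + 1)))
        ≤ ∑ k ∈ Finset.range K, (γ ^ k)⁻¹ * s (k + n) := by
      intro n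
      set u : ℕ → ℝ := fun j => (γ ^ j)⁻¹ * s (j + n) with hu_def
      have e1 : ∀ k, (γ ^ k)⁻¹ * s (k + (n + 1)) = γ * u (k + 1) := by
        intro k
        rw [hu_def]
        have e : k + 1 + n = k + (n + 1) := by omega
        simp only [e]
        rw [pow_succ, mul_inv, ← mul_assoc, ← mul_assoc, mul_comm γ (γ ^ k)⁻¹,
          mul_assoc (γ ^ k)⁻¹, mul_inv_cancel₀ hγ0.ne', mul_one]
      have hsum1 : (∑ k ∈ Finset.range K, (γ ^ k)⁻¹ * s (k + (n + 1)))
          = γ * ∑ k ∈ Finset.range K, u (k + 1) := by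
        rw [Finset.mul_sum]
        exact Finset.sum_congr rfl fun k _ => e1 k
      have hsum2 : (∑ k ∈ Finset.range K, u (k + 1))
          = (∑ k ∈ Finset.range K, u k) + u K - u 0 := by
        have := Finset.sum_range_succ' u K
        rw [Finset.sum_range_succ] at this
        linarith
      have huK : u K ≤ u 0 := by
        rw [hu_def]
        simp only [pow_zero, inv_one, one_mul, Nat.zero_add]
        have h := hsK n
        have e : n + K = K + n := by omega
        rw [e] at h
        have hKpos : (0:ℝ) < γ ^ K := by positivity
        calc (γ ^ K)⁻¹ * s (K + n) ≤ (γ ^ K)⁻¹ * (γ ^ K * s n) :=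
              mul_le_mul_of_nonneg_left h (by positivity)
          _ = s n := by field_simp
      have hsumnn : 0 ≤ ∑ k ∈ Finset.range K, u k := by
        refine Finset.sum_nonneg fun i _ => ?_
        rw [hu_def]
        have := hs0 (i + n)
        positivity
      rw [hsum1, hsum2]
      nlinarith [hγ0, hγ1]
    have hmono : ∀ n, (∑ k ∈ Finset.range K, (γ ^ k)⁻¹ * s (k + n))
        ≤ ∑ k ∈ Finset.range K, (γ ^ k)⁻¹ * s (k + 0) := by
      intro n
      induction n with
      | zero => exact le_refl _
      | succ n ih => exact (hstep n).trans ih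
    have hD0 : (∑ k ∈ Finset.range K, (γ ^ k)⁻¹ * s (k + 0)) = dhat g γ K z y := by
      have := hD 0
      simp only [Function.iterate_zero, id_eq] at this
      exact this.symm
    rw [hD n]
    calc (∑ k ∈ Finset.range K, (γ ^ k)⁻¹ * s (k + n))
        ≤ ∑ k ∈ Finset.range K, (γ ^ k)⁻¹ * s (k + 0) := hmono n
      _ = dhat g γ K z y := hD0
      _ = dhat g γ K y z := dhat_symm g γ K z y
      _ ≤ ε := hdh
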